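/- arXiv:1210.5992 — 3 statements merged into one kernel-verified Lean document; each statement's English description precedes it below -/
import Mathlib

section
/- Let ℓ : ℝ^p → ℝ be a convex function, A ⊆ {1,...,p} a set of indices, and β̂ a point with β̂_j = 0 for all j ∉ A such that the subgradient satisfies ∇_j ℓ(β̂) = 0 for all j ∈ A. Suppose weights w_j ≥ 0 for j ∉ A satisfy w_j > |∇_j ℓ(β̂)| for all j ∉ A. Then for every β, ℓ(β) + Σ_{j∉A} w_j|β_j| ≥ ℓ(β̂) + Σ_{j∉A} w_j|β̂_j|, with strict inequality unless β_j = 0 for all j ∉ A. -/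
open Finset

/-- If β̂ is supported on A, a subgradient g of the convex loss ℓ at β̂
vanishes on A and is dominated by the weights off A, then β̂ minimizes the weighted
ℓ1-penalized objective, strictly unless the competitor vanishes off A. -/
theorem lla_weighted_l1_minimizer {p : ℕ} (ℓ : (Fin p → ℝ) → ℝ)
    (hconv : ConvexOn ℝ Set.univ ℓ)
    (A : Finset (Fin p)) (βhat : Fin p → ℝ) (hsupp : ∀ j ∉ A, βhat j = 0)
    (g : Fin p → ℝ)
    (hsub : ∀ β, ℓ βhat + ∑ j, g j * (β j - βhat j) ≤ ℓ β)
    (hgA : ∀ j ∈ A, g j = 0)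
    (w : Fin p → ℝ) (hw0 : ∀ j ∉ A, 0 ≤ w j)
    (hgw : ∀ j ∉ A, |g j| < w j) :
    ∀ β : Fin p → ℝ,
      (ℓ βhat + ∑ j ∈ Aᶜ, w j * |βhat j| ≤ ℓ β + ∑ j ∈ Aᶜ, w j * |β j|) ∧
      ((∃ j ∉ A, β j ≠ 0) →
        ℓ βhat + ∑ j ∈ Aᶜ, w j * |βhat j| < ℓ β + ∑ j ∈ Aᶜ, w j * |β j|) := by
  intro β
  have hpen0 : ∑ j ∈ Aᶜ, w j * |βhat j| = 0 := by
    apply Finset.sum_eq_zero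
    intro j hj
    rw [hsupp j (Finset.mem_compl.mp hj)]
    simp
  have hsum : ∑ j, g j * (β j - βhat j) = ∑ j ∈ Aᶜ, g j * β j := by
    rw [← Finset.sum_compl_add_sum A (fun j => g j * (β j - βhat j))]
    have h1 : ∑ j ∈ A, g j * (β j - βhat j) = 0 :=
      Finset.sum_eq_zero fun j hj => by rw [hgA j hj]; ring
    have h2 : ∑ j ∈ Aᶜ, g j * (β j - βhat j) = ∑ j ∈ Aᶜ, g j * β j :=
      Finset.sum_congr rfl fun j hj => by
        rw [hsupp j (Finset.mem_compl.mp hj)]; ring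
    rw [h1, h2, add_zero]
  have hkey := hsub β
  rw [hsum] at hkey
  have hterm : ∀ j ∈ Aᶜ, -(w j * |β j|) ≤ g j * β j := by
    intro j hj
    have hj' := Finset.mem_compl.mp hj
    have : |g j * β j| ≤ w j * |β j| := by
      rw [abs_mul]
      exact mul_le_mul_of_nonneg_right (hgw j hj').le (abs_nonneg _)
    linarith [neg_abs_le (g j * β j)]
  constructor
  · have hsumge : -(∑ j ∈ Aᶜ, w j * |β j|) ≤ ∑ j ∈ Aᶜ, g j * β j := by
      rw [← Finset.sum_neg_distrib]
      exact Finset.sum_le_sum hterm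
    rw [hpen0]
    linarith
  · rintro ⟨j₀, hj₀, hβj₀⟩
    have hj₀c : j₀ ∈ Aᶜ := Finset.mem_compl.mpr hj₀
    have hstrict : -(w j₀ * |β j₀|) < g j₀ * β j₀ := by
      have h1 : |g j₀ * β j₀| < w j₀ * |β j₀| := by
        rw [abs_mul]
        exact mul_lt_mul_of_pos_right (hgw j₀ hj₀) (abs_pos.mpr hβj₀)
      linarith [neg_abs_le (g j₀ * β j₀)]
    have hsumgt : -(∑ j ∈ Aᶜ, w j * |β j|) < ∑ j ∈ Aᶜ, g j * β j := by
      rw [← Finset.sum_neg_distrib]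
      exact Finset.sum_lt_sum (fun j hj => hterm j hj) ⟨j₀, hj₀c, hstrict⟩
    rw [hpen0]
    linarith
end

section
/- Suppose ℓ : ℝ^p → ℝ is convex, β̂ is the unique minimizer of ℓ over {β : β_j = 0 for all j ∉ A}, there is a subgradient g of ℓ at β̂ with g_j = 0 for j ∈ A and |g_j| < a₁λ for j ∉ A, and min_{j∈A}|β̂_j| > aλ. Let P_λ be a folded concave penalty with P'_λ(0) ≥ a₁λ and P'_λ(t) = 0 for t ≥ aλ. Then β̂ is the unique minimizer of β ↦ ℓ(β) + Σ_j P'_λ(|β̂_j|)·|β_j|, i.e., the LLA iteration started at β̂ returns β̂ (it is a fixed point). -/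
open Finset

/-- Theorem 2: the oracle estimator is a fixed point of the LLA
iteration: it is the unique minimizer of the LLA objective started at itself. -/
theorem lla_fixed_point {p : ℕ} (ℓ : (Fin p → ℝ) → ℝ)
    (hconv : ConvexOn ℝ Set.univ ℓ)
    (A : Finset (Fin p)) (a a₁ lam : ℝ) (ha : 0 < a) (ha₁ : 0 < a₁) (hlam : 0 < lam)
    (βhat : Fin p → ℝ) (hsupp : ∀ j ∉ A, βhat j = 0)
    (hmin : ∀ β : Fin p → ℝ, (∀ j ∉ A, β j = 0) → β ≠ βhat → ℓ βhat < ℓ β)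
    (g : Fin p → ℝ)
    (hsub : ∀ β, ℓ βhat + ∑ j, g j * (β j - βhat j) ≤ ℓ β)
    (hgA : ∀ j ∈ A, g j = 0) (hgAc : ∀ j ∉ A, |g j| < a₁ * lam)
    (hsignal : ∀ j ∈ A, a * lam < |βhat j|)
    (P' : ℝ → ℝ) (hP0 : a₁ * lam ≤ P' 0) (hPz : ∀ t, a * lam ≤ t → P' t = 0) :
    ∀ β : Fin p → ℝ, β ≠ βhat →
      ℓ βhat + ∑ j, P' |βhat j| * |βhat j| < ℓ β + ∑ j, P' |βhat j| * |β j| := by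
  intro β hβ
  have hwA : ∀ j ∈ A, P' |βhat j| = 0 := fun j hj => hPz _ (hsignal j hj).le
  have hL : ∑ j, P' |βhat j| * |βhat j| = 0 := by
    apply Finset.sum_eq_zero
    intro j _
    by_cases hj : j ∈ A
    · rw [hwA j hj, zero_mul]
    · rw [hsupp j hj, abs_zero, mul_zero]
  rw [hL, add_zero]
  by_cases hcase : ∀ j ∉ A, β j = 0
  · have h1 : ℓ βhat < ℓ β := hmin β hcase hβ
    have h2 : (0:ℝ) ≤ ∑ j, P' |βhat j| * |β j| := by
      apply Finset.sum_nonneg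
      intro j _
      by_cases hj : j ∈ A
      · rw [hwA j hj, zero_mul]
      · rw [hcase j hj, abs_zero, mul_zero]
    linarith
  · push_neg at hcase
    obtain ⟨j₀, hj₀A, hj₀⟩ := hcase
    have key : 0 < ∑ j, (g j * (β j - βhat j) + P' |βhat j| * |β j|) := by
      apply Finset.sum_pos'
      · intro j _
        by_cases hj : j ∈ A
        · rw [hwA j hj, hgA j hj, zero_mul, zero_mul]; norm_num
        · rw [hsupp j hj, abs_zero, sub_zero]
          have h1 : |g j| < a₁ * lam := hgAc j hj
          have h2 : a₁ * lam ≤ P' 0 := hP0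
          have h3 : -(|g j| * |β j|) ≤ g j * β j := by
            have := neg_abs_le (g j * β j)
            rw [abs_mul] at this; linarith
          nlinarith [abs_nonneg (β j), abs_nonneg (g j)]
      · refine ⟨j₀, Finset.mem_univ _, ?_⟩
        rw [hsupp j₀ hj₀A, abs_zero, sub_zero]
        have h1 : |g j₀| < a₁ * lam := hgAc j₀ hj₀A
        have h3 : -(|g j₀| * |β j₀|) ≤ g j₀ * β j₀ := by
          have := neg_abs_le (g j₀ * β j₀)
          rw [abs_mul] at this; linarith
        have h4 : 0 < |β j₀| := abs_pos.mpr hj₀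
        nlinarith [hP0]
    have := hsub β
    rw [Finset.sum_add_distrib] at key
    linarith
end

section
/- Knight's identity: for the check loss ρ_τ(u) = u(τ − 1_{u≤0}) with τ ∈ (0,1), for all real x and y, ρ_τ(x − y) − ρ_τ(x) = y(1_{x≤0} − τ) + ∫₀^y (1_{x≤s} − 1_{x≤0}) ds. -/
open MeasureTheory

lemma knight_aux (x y : ℝ) :
    (∫ s in (0 : ℝ)..y, ((if x ≤ s then (1 : ℝ) else 0) - if x ≤ 0 then 1 else 0)) =
      (max (y - x) 0 - max (-x) 0) - y * (if x ≤ 0 then 1 else 0) := by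
  set c : ℝ := if x ≤ 0 then 1 else 0 with hc
  set F : ℝ → ℝ := fun t => max (t - x) 0 - t * c with hF
  have hcont : ContinuousOn F (Set.uIcc 0 y) := by
    apply Continuous.continuousOn
    exact ((continuous_id.sub continuous_const).max continuous_const).sub
      (continuous_id.mul continuous_const)
  have hderiv : ∀ t ∈ Set.Ioo (min 0 y) (max 0 y),
      HasDerivWithinAt F ((if x ≤ t then (1:ℝ) else 0) - c) (Set.Ioi t) t := by
    intro t _
    have hmul : HasDerivWithinAt (fun s : ℝ => s * c) c (Set.Ioi t) t := by
      simpa using ((hasDerivAt_id t).mul_const c).hasDerivWithinAt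
    rcases le_or_gt x t with h | h
    · rw [if_pos h]
      have hmax : HasDerivWithinAt (fun s : ℝ => max (s - x) 0) 1 (Set.Ioi t) t := by
        apply ((hasDerivAt_id t).sub_const x).hasDerivWithinAt.congr
        · intro s hs
          have : t < s := Set.mem_Ioi.mp hs
          show max (s - x) 0 = s - x
          exact max_eq_left (by linarith)
        · show max (t - x) 0 = t - x
          exact max_eq_left (by linarith)
      exact hmax.sub hmul
    · rw [if_neg (not_le.mpr h)]
      have hmax : HasDerivWithinAt (fun s : ℝ => max (s - x) 0) 0 (Set.Ioi t) t := by
        apply (hasDerivAt_const t (0:ℝ)).hasDerivWithinAt.congr_of_eventuallyEq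
        · filter_upwards [Ioo_mem_nhdsGT_of_mem (Set.left_mem_Ico.mpr h)] with s hs
          show max (s - x) 0 = 0
          exact max_eq_right (by linarith [hs.2])
        · show max (t - x) 0 = 0
          exact max_eq_right (by linarith)
      exact hmax.sub hmul
  have hint : IntervalIntegrable (fun s => (if x ≤ s then (1:ℝ) else 0) - c)
      MeasureTheory.volume 0 y := by
    apply IntervalIntegrable.sub _ intervalIntegrable_const
    apply Monotone.intervalIntegrable
    intro a b hab
    by_cases h : x ≤ a
    · simp [h, le_trans h hab]
    · by_cases h2 : x ≤ b <;> simp [h, h2]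
  rw [intervalIntegral.integral_eq_sub_of_hasDeriv_right hcont hderiv hint]
  show (max (y - x) 0 - y * c) - (max (0 - x) 0 - 0 * c) = _
  rw [zero_sub]
  ring

/-- Knight's identity for the check loss. -/
theorem knight_identity (τ : ℝ) (hτ : τ ∈ Set.Ioo (0 : ℝ) 1) (x y : ℝ) :
    let ρ : ℝ → ℝ := fun u => u * (τ - if u ≤ 0 then 1 else 0)
    ρ (x - y) - ρ x =
      y * ((if x ≤ 0 then (1 : ℝ) else 0) - τ) +
        ∫ s in (0 : ℝ)..y, ((if x ≤ s then (1 : ℝ) else 0) - if x ≤ 0 then 1 else 0) := by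
  intro ρ
  rw [knight_aux]
  simp only [ρ]
  split_ifs with h1 h2 h2
  · rw [max_eq_left (by linarith), max_eq_left (by linarith)]; ring
  · rw [max_eq_left (by linarith), max_eq_right (by linarith)]; ring
  · rw [max_eq_right (by linarith), max_eq_left (by linarith)]; ring
  · rw [max_eq_right (by linarith), max_eq_right (by linarith)]; ring
end
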